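/- arXiv:1308.5854 — 2 statements merged into one kernel-verified Lean document; each statement's English description precedes it below -/
import Mathlib

section
/- Let X = {X_s, s ≥ 0} be a real-valued stochastic process with independent increments and jointly measurable paths, let θ ∈ ℝ, and suppose hypothesis (H^θ2) holds with constant c(θ). Define x_ε^θ(t) = ε c(θ) ∫_0^{2t/ε²} e^{iθ X_s} ds for t ∈ [0,T]. Then for all 0 ≤ s < t ≤ T, lim_{ε→0} E[‖x_ε^θ(t) − x_ε^θ(s)‖²] = 2(t−s), where ‖·‖ denotes the modulus of a complex number. -/
open MeasureTheory ProbabilityTheory Complex Filter Topology Set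

noncomputable section

/-- The characteristic function of the increment `X_y - X_x` evaluated at `θ`:
`φ_{X_y - X_x}(θ) = E[exp(i θ (X_y - X_x))]`. -/
def charIncr {Ω : Type*} [MeasurableSpace Ω] (P : Measure Ω) (X : ℝ → Ω → ℝ)
    (x y θ : ℝ) : ℂ :=
  ∫ ω, Complex.exp (Complex.I * θ * (X y ω - X x ω)) ∂P

/-- A real-valued process has independent increments. -/
def HasIndepIncrements {Ω : Type*} [MeasurableSpace Ω] (P : Measure Ω)
    (X : ℝ → Ω → ℝ) : Prop :=
  ∀ (n : ℕ) (τ : Fin (n + 1) → ℝ), Monotone τ → (∀ i, 0 ≤ τ i) →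
    iIndepFun
      (fun i : Fin n => fun ω => X (τ i.succ) ω - X (τ i.castSucc) ω) P

/-- Hypothesis (H^θ1). -/
def HypOne {Ω : Type*} [MeasurableSpace Ω] (P : Measure Ω) (X : ℝ → Ω → ℝ)
    (θ T : ℝ) : Prop :=
  ∃ K : ℝ, ∀ ε : ℝ, 0 < ε → ∀ s t : ℝ, 0 ≤ s → s < t → t ≤ T →
    ε ^ 2 * ∫ y in (2 * s / ε ^ 2)..(2 * t / ε ^ 2),
        ∫ x in (2 * s / ε ^ 2)..y, ‖charIncr P X x y θ‖
      ≤ K * (t - s)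

/-- Hypothesis (H^θ2), with constant `c`. -/
def HypTwo {Ω : Type*} [MeasurableSpace Ω] (P : Measure Ω) (X : ℝ → Ω → ℝ)
    (θ T c : ℝ) : Prop :=
  ∀ s t : ℝ, 0 ≤ s → s < t → t ≤ T →
    Tendsto (fun ε : ℝ =>
        (↑(ε ^ 2 * c ^ 2) : ℂ) * ∫ x in (2 * s / ε ^ 2)..(2 * t / ε ^ 2),
          ∫ y in (2 * s / ε ^ 2)..x,
            (charIncr P X y x θ + charIncr P X y x (-θ)))
      (𝓝[>] 0) (𝓝 ((2 * (t - s) : ℝ) : ℂ))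

/-- Hypothesis (H^θ3). -/
def HypThree {Ω : Type*} [MeasurableSpace Ω] (P : Measure Ω) (X : ℝ → Ω → ℝ)
    (θ T : ℝ) : Prop :=
  ∀ s t : ℝ, 0 ≤ s → s < t → t ≤ T →
    Tendsto (fun ε : ℝ =>
        ε ^ 2 * ∫ y in (2 * s / ε ^ 2)..(2 * t / ε ^ 2),
          ∫ x in (2 * s / ε ^ 2)..y,
            ‖charIncr P X x y θ‖ * ‖charIncr P X (2 * s / ε ^ 2) x (2 * θ)‖)
      (𝓝[>] 0) (𝓝 0)

/-- A standard real Brownian motion on `[0, T]`. -/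
def IsStdBMOn {Ω : Type*} [MeasurableSpace Ω] (P : Measure Ω)
    (B : ℝ → Ω → ℝ) (T : ℝ) : Prop :=
  (∀ t ∈ Set.Icc (0 : ℝ) T, Measurable (B t)) ∧
  (∀ᵐ ω ∂P, B 0 ω = 0) ∧
  (∀ᵐ ω ∂P, ContinuousOn (fun t => B t ω) (Set.Icc 0 T)) ∧
  (∀ s t : ℝ, 0 ≤ s → s ≤ t → t ≤ T →
    P.map (fun ω => B t ω - B s ω) = gaussianReal 0 (Real.toNNReal (t - s))) ∧
  (∀ (n : ℕ) (τ : Fin (n + 1) → ℝ), Monotone τ → (∀ i, τ i ∈ Set.Icc (0 : ℝ) T) →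
    iIndepFun
      (fun i : Fin n => fun ω => B (τ i.succ) ω - B (τ i.castSucc) ω) P)

/-- A complex Brownian motion on `[0, T]`: its real and imaginary parts are two
independent standard real Brownian motions. -/
def IsComplexBMOn {Ω : Type*} [MeasurableSpace Ω] (P : Measure Ω)
    (Z : ℝ → Ω → ℂ) (T : ℝ) : Prop :=
  IsStdBMOn P (fun t ω => (Z t ω).re) T ∧
  IsStdBMOn P (fun t ω => (Z t ω).im) T ∧
  IndepFun (fun ω => fun t : ℝ => (Z t ω).re) (fun ω => fun t : ℝ => (Z t ω).im) P

/-- The (Kac–Stroock type) approximation process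
`x_ε^θ(t) = ε c(θ) ∫_0^{2t/ε²} e^{iθ X_s} ds`. -/
def approxProc {Ω : Type*} [MeasurableSpace Ω] (X : ℝ → Ω → ℝ)
    (θ c ε t : ℝ) (ω : Ω) : ℂ :=
  (↑(ε * c) : ℂ) * ∫ s in (0 : ℝ)..(2 * t / ε ^ 2),
    Complex.exp (Complex.I * θ * X s ω)

instance (T : ℝ) : MeasurableSpace C(Set.Icc (0 : ℝ) T, ℂ) := borel _

/-! Expanding the square and applying Fubini,
`E |∫_a^b e^{iθ X_u} du|² = ∫∫_{(a,b]²} φ_{X_x - X_y}(θ) dx dy`, and folding the square along its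
diagonal turns this into `∫_a^b ∫_a^x (φ_{X_x - X_y}(θ) + φ_{X_x - X_y}(-θ)) dy dx`.
With `a = 2s/ε²`, `b = 2t/ε²`, the second moment of `x_ε^θ(t) - x_ε^θ(s)` is therefore, for every
`ε`, exactly the quantity whose limit is prescribed by (H^θ2). -/

section Triangle

variable {E : Type*} [NormedAddCommGroup E] [NormedSpace ℝ E]

theorem integral_prod_eq_integral_Iic_add_swap {μ : Measure ℝ} [SFinite μ]
    [NullSingletonClass μ] {f : ℝ × ℝ → E} (hf : Integrable f (μ.prod μ)) :
    ∫ p, f p ∂(μ.prod μ) = ∫ x, ∫ y in Iic x, (f (x, y) + f (y, x)) ∂μ ∂μ := by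
  set D : Set (ℝ × ℝ) := {p | p.2 ≤ p.1}
  have hD : MeasurableSet D := measurableSet_le measurable_snd measurable_fst
  have lower : ∀ x, ∫ y, D.indicator f (x, y) ∂μ = ∫ y in Iic x, f (x, y) ∂μ := by
    intro x
    rw [← integral_indicator measurableSet_Iic]
    rfl
  have upper : ∀ x, ∫ y, Dᶜ.indicator f (y, x) ∂μ = ∫ y in Iic x, f (y, x) ∂μ := by
    intro x
    rw [setIntegral_congr_set Iio_ae_eq_Iic.symm, ← integral_indicator measurableSet_Iio]
    congr 1 with y
    simp [D, Set.indicator]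
  have hlower := (hf.indicator hD).integral_prod_left
  have hupper := (hf.indicator hD.compl).integral_prod_right
  rw [← integral_add_compl hD hf, ← integral_indicator hD, ← integral_indicator hD.compl,
    integral_prod _ (hf.indicator hD), integral_prod_symm _ (hf.indicator hD.compl),
    ← integral_add hlower hupper]
  refine integral_congr_ae ?_
  filter_upwards [hf.prod_right_ae, hf.swap.prod_right_ae] with x hx hx'
  rw [lower, upper]
  exact (integral_add hx.integrableOn hx'.integrableOn).symm

theorem setIntegral_Ioc_prod_Ioc_eq_intervalIntegral {a b : ℝ} (hab : a ≤ b)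
    {f : ℝ × ℝ → E} (hf : IntegrableOn f (Ioc a b ×ˢ Ioc a b)) :
    ∫ p in Ioc a b ×ˢ Ioc a b, f p = ∫ x in a..b, ∫ y in a..x, (f (x, y) + f (y, x)) := by
  rw [IntegrableOn, Measure.volume_eq_prod, ← Measure.prod_restrict] at hf
  rw [Measure.volume_eq_prod, ← Measure.prod_restrict]
  rw [integral_prod_eq_integral_Iic_add_swap hf, intervalIntegral.integral_of_le hab]
  refine setIntegral_congr_fun measurableSet_Ioc fun x hx => ?_
  have hIoc : Iic x ∩ Ioc a b = Ioc a x :=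
    ext fun y => ⟨fun h => ⟨h.2.1, h.1⟩, fun h => ⟨h.2, h.1, h.2.trans hx.2⟩⟩
  rw [Measure.restrict_restrict measurableSet_Iic, hIoc, intervalIntegral.integral_of_le hx.1.le]

end Triangle

open ComplexConjugate

section SecondMoment

variable {α Ω : Type*} [MeasurableSpace α] [MeasurableSpace Ω] {ν : Measure α} {P : Measure Ω}
  [IsFiniteMeasure ν] [IsFiniteMeasure P] {F : α → Ω → ℂ} {C : ℝ}

theorem integrable_mul_conj_of_norm_le (hF : Measurable (Function.uncurry F))
    (hFC : ∀ u ω, ‖F u ω‖ ≤ C) :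
    Integrable (fun q : (α × α) × Ω => F q.1.1 q.2 * conj (F q.1.2 q.2)) ((ν.prod ν).prod P) := by
  have hF₁ : Measurable fun q : (α × α) × Ω => F q.1.1 q.2 :=
    hF.comp (measurable_fst.fst.prodMk measurable_snd)
  have hF₂ : Measurable fun q : (α × α) × Ω => F q.1.2 q.2 :=
    hF.comp (measurable_fst.snd.prodMk measurable_snd)
  refine .of_bound (hF₁.mul (Complex.continuous_conj.measurable.comp hF₂)).aestronglyMeasurable
    (C * C) (.of_forall fun q => ?_)
  rw [norm_mul, RCLike.norm_conj]
  exact mul_le_mul (hFC _ _) (hFC _ _) (norm_nonneg _) ((norm_nonneg _).trans (hFC q.1.1 q.2))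

theorem integral_norm_integral_sq_eq (hF : Measurable (Function.uncurry F))
    (hFC : ∀ u ω, ‖F u ω‖ ≤ C) :
    ((∫ ω, ‖∫ u, F u ω ∂ν‖ ^ 2 ∂P : ℝ) : ℂ) =
      ∫ p, ∫ ω, F p.1 ω * conj (F p.2 ω) ∂P ∂(ν.prod ν) :=
  calc ((∫ ω, ‖∫ u, F u ω ∂ν‖ ^ 2 ∂P : ℝ) : ℂ)
      = ∫ ω, ((‖∫ u, F u ω ∂ν‖ : ℂ) ^ 2) ∂P := by
        rw [← integral_complex_ofReal]
        push_cast
        rfl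
    _ = ∫ ω, ∫ p, F p.1 ω * conj (F p.2 ω) ∂(ν.prod ν) ∂P := by
        congr 1 with ω
        rw [integral_prod_mul (F · ω) (conj <| F · ω), integral_conj, Complex.mul_conj']
    _ = _ := integral_integral_swap (integrable_mul_conj_of_norm_le hF hFC).swap

end SecondMoment

theorem norm_exp_I_mul_ofReal_mul_ofReal (θ x : ℝ) : ‖cexp (I * θ * x)‖ = 1 := by
  rw [← norm_exp_I_mul_ofReal (θ * x), ofReal_mul, mul_assoc]

section Increments

variable {Ω : Type*} [MeasurableSpace Ω] {P : Measure Ω} {X : ℝ → Ω → ℝ}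

theorem charIncr_neg (x y θ : ℝ) :
    charIncr P X x y (-θ) = charIncr P X y x θ := by
  unfold charIncr
  congr 1 with ω
  push_cast
  ring_nf

theorem measurable_uncurry_exp_I_mul (hX : Measurable (Function.uncurry X)) (θ : ℝ) :
    Measurable (Function.uncurry fun u ω => cexp (I * θ * X u ω)) :=
  ((Complex.measurable_ofReal.comp hX).const_mul _).cexp

theorem integral_norm_intervalIntegral_sq_eq [IsFiniteMeasure P]
    (hX : Measurable (Function.uncurry X)) (θ : ℝ) {a b : ℝ} (hab : a ≤ b) :
    ((∫ ω, ‖∫ u in a..b, cexp (I * θ * X u ω)‖ ^ 2 ∂P : ℝ) : ℂ) =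
      ∫ x in a..b, ∫ y in a..x, (charIncr P X y x θ + charIncr P X y x (-θ)) := by
  have hF := measurable_uncurry_exp_I_mul hX θ
  have hFC : ∀ u ω, ‖cexp (I * θ * X u ω)‖ ≤ 1 := fun u ω =>
    (norm_exp_I_mul_ofReal_mul_ofReal θ _).le
  have hcharIncr : ∀ x y, ∫ ω, cexp (I * θ * X x ω) * conj (cexp (I * θ * X y ω)) ∂P =
      charIncr P X y x θ := by
    intro x y
    unfold charIncr
    congr 1 with ω
    rw [← Complex.exp_conj, ← Complex.exp_add]
    simp only [map_mul, Complex.conj_I, Complex.conj_ofReal]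
    ring_nf
  have hint : IntegrableOn (fun p : ℝ × ℝ => charIncr P X p.2 p.1 θ) (Ioc a b ×ˢ Ioc a b) := by
    have := (integrable_mul_conj_of_norm_le (ν := volume.restrict (Ioc a b)) (P := P)
      hF hFC).integral_prod_left
    simp only [hcharIncr, Measure.prod_restrict, ← Measure.volume_eq_prod] at this
    exact this
  calc _ = ∫ p in Ioc a b ×ˢ Ioc a b, charIncr P X p.2 p.1 θ := by
        simp_rw [intervalIntegral.integral_of_le hab]
        rw [integral_norm_integral_sq_eq hF hFC, Measure.prod_restrict, ← Measure.volume_eq_prod]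
        simp_rw [hcharIncr]
    _ = _ := by
        rw [setIntegral_Ioc_prod_Ioc_eq_intervalIntegral hab hint]
        simp_rw [charIncr_neg]

theorem approxProc_sub (hX : Measurable (Function.uncurry X)) (θ c ε s t : ℝ) (ω : Ω) :
    approxProc X θ c ε t ω - approxProc X θ c ε s ω =
      (↑(ε * c) : ℂ) * ∫ u in (2 * s / ε ^ 2)..(2 * t / ε ^ 2), cexp (I * θ * X u ω) := by
  have hint : ∀ r, IntervalIntegrable (fun u => cexp (I * θ * X u ω)) volume 0 r := fun r =>
    (intervalIntegrable_const (c := (1 : ℝ))).mono_fun'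
      ((measurable_uncurry_exp_I_mul hX θ).comp measurable_prodMk_right).aestronglyMeasurable
      (.of_forall fun u => (norm_exp_I_mul_ofReal_mul_ofReal θ _).le)
  rw [approxProc, approxProc, ← mul_sub,
    intervalIntegral.integral_interval_sub_left (hint _) (hint _)]

theorem integral_norm_approxProc_sub_sq_eq [IsFiniteMeasure P]
    (hX : Measurable (Function.uncurry X)) (θ c ε : ℝ) {s t : ℝ} (hst : s ≤ t) :
    ((∫ ω, ‖approxProc X θ c ε t ω - approxProc X θ c ε s ω‖ ^ 2 ∂P : ℝ) : ℂ) =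
      (↑(ε ^ 2 * c ^ 2) : ℂ) * ∫ x in (2 * s / ε ^ 2)..(2 * t / ε ^ 2),
        ∫ y in (2 * s / ε ^ 2)..x, (charIncr P X y x θ + charIncr P X y x (-θ)) := by
  have hab : 2 * s / ε ^ 2 ≤ 2 * t / ε ^ 2 := by gcongr
  simp_rw [approxProc_sub hX, norm_mul, mul_pow, integral_const_mul, norm_real, Real.norm_eq_abs,
    sq_abs, ofReal_mul, integral_norm_intervalIntegral_sq_eq hX θ hab]
  push_cast
  ring

end Increments

theorem second_moment_limit_general
    {Ω : Type*} [MeasurableSpace Ω] (P : Measure Ω) [IsProbabilityMeasure P]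
    (X : ℝ → Ω → ℝ)
    (hXjoint : Measurable (Function.uncurry X))
    (T : ℝ) (θ c : ℝ)
    (h2 : HypTwo P X θ T c) :
    ∀ s t : ℝ, 0 ≤ s → s < t → t ≤ T →
      Tendsto (fun ε : ℝ =>
          ∫ ω, ‖approxProc X θ c ε t ω - approxProc X θ c ε s ω‖ ^ 2 ∂P)
        (𝓝[>] 0) (𝓝 (2 * (t - s))) := by
  intro s t hs hst ht
  have hre := (continuous_re.tendsto _).comp (h2 s t hs hst ht)
  simp_rw [Function.comp_def, ← integral_norm_approxProc_sub_sq_eq hXjoint θ c _ hst.le,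
    ofReal_re] at hre
  exact hre

/-- convergence of the second moment of the modulus of increments of
`x_ε^θ` under (H^θ2). -/
theorem second_moment_limit
    {Ω : Type*} [MeasurableSpace Ω] (P : Measure Ω) [IsProbabilityMeasure P]
    (X : ℝ → Ω → ℝ) (hXmeas : ∀ s : ℝ, Measurable (X s))
    (hXjoint : Measurable (Function.uncurry X))
    (hIndep : HasIndepIncrements P X)
    (T : ℝ) (hT : 0 < T) (θ c : ℝ) (hc : 0 < c)
    (h2 : HypTwo P X θ T c) :
    ∀ s t : ℝ, 0 ≤ s → s < t → t ≤ T →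
      Tendsto (fun ε : ℝ =>
          ∫ ω, ‖approxProc X θ c ε t ω - approxProc X θ c ε s ω‖ ^ 2 ∂P)
        (𝓝[>] 0) (𝓝 (2 * (t - s))) :=
  second_moment_limit_general P X hXjoint T θ c h2

end
end

section
/- Let a > 0 and b ∈ ℝ, and set c² = (a² + b²)/(2a). Then for all 0 ≤ s < t, lim_{ε→0} ε² c² ∫_{2s/ε²}^{2t/ε²} ∫_{2s/ε²}^{x} (e^{−(x−y)(a+bi)} + e^{−(x−y)(a−bi)}) dy dx = 2(t−s). -/
/-!
For `Re w ≥ 0, w ≠ 0` the double integral is explicit: with `D = U - L`,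
`∫_L^U ∫_L^x e^{-(x-y)w} dy dx = D / w - (1 - e^{-Dw}) / w²`, and the second term is bounded by
`2 / |w|²`. Taking `w = a + bi` and its conjugate, the linear terms add up to
`D (1/w + 1/w̄) = D · 2a / (a² + b²) = D / c²`, so with `D = 2(t - s)/ε²` the prefactor `ε² c²`
turns them into `2(t - s)`, while it sends the bounded terms to `0`.
-/

open MeasureTheory Filter Topology Complex ComplexConjugate

namespace Complex

theorem inv_add_inv_conj (w : ℂ) : w⁻¹ + (conj w)⁻¹ = ((2 * w.re / normSq w : ℝ) : ℂ) := by
  rw [← map_inv₀, add_conj, inv_re]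
  push_cast; ring

theorem norm_one_sub_exp_neg_mul_le {w : ℂ} (hw : 0 ≤ w.re) {D : ℝ} (hD : 0 ≤ D) :
    ‖1 - exp (-D * w)‖ ≤ 2 := by
  have h : ‖exp (-D * w)‖ ≤ 1 := by
    rw [norm_exp, Real.exp_le_one_iff]
    simpa using mul_nonneg hD hw
  calc ‖1 - exp (-D * w)‖ ≤ ‖(1 : ℂ)‖ + ‖exp (-D * w)‖ := norm_sub_le _ _
    _ ≤ 2 := by rw [norm_one]; linarith

variable {w : ℂ}

theorem integral_exp_neg_sub_mul (hw : w ≠ 0) (L x : ℝ) :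
    ∫ y in L..x, exp (-(↑x - ↑y) * w) = (1 - exp (-↑(x - L) * w)) / w := by
  have h (y : ℝ) : exp (-(↑x - ↑y) * w) = exp (-w * ↑(x - y)) := by push_cast; ring_nf
  simp_rw [h]
  rw [intervalIntegral.integral_comp_sub_left (fun u : ℝ ↦ exp (-w * u)),
    integral_exp_mul_complex (neg_ne_zero.mpr hw), sub_self, ofReal_zero, mul_zero, exp_zero]
  field_simp
  ring_nf

theorem integral_one_sub_exp_neg_mul_div (hw : w ≠ 0) (D : ℝ) :
    ∫ x in (0 : ℝ)..D, (1 - exp (-↑x * w)) / w = ↑D / w - (1 - exp (-↑D * w)) / w ^ 2 := by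
  have h (x : ℝ) : (1 - exp (-↑x * w)) / w = 1 / w - exp (-w * x) / w := by ring_nf
  simp_rw [h]
  rw [intervalIntegral.integral_sub intervalIntegrable_const
      (by apply Continuous.intervalIntegrable; fun_prop),
    intervalIntegral.integral_div, intervalIntegral.integral_div,
    integral_exp_mul_complex (neg_ne_zero.mpr hw), intervalIntegral.integral_const]
  simp only [sub_zero, ofReal_zero, mul_zero, exp_zero, real_smul]
  field_simp
  ring_nf

theorem integral_integral_exp_neg_sub_mul (hw : w ≠ 0) (L U : ℝ) :
    ∫ x in L..U, ∫ y in L..x, exp (-(↑x - ↑y) * w) =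
      ↑(U - L) / w - (1 - exp (-↑(U - L) * w)) / w ^ 2 := by
  simp_rw [integral_exp_neg_sub_mul hw L]
  rw [intervalIntegral.integral_comp_sub_right (fun x : ℝ ↦ (1 - exp (-↑x * w)) / w), sub_self,
    integral_one_sub_exp_neg_mul_div hw]

theorem continuous_integral_exp_neg_sub_mul (hw : w ≠ 0) (L : ℝ) :
    Continuous fun x : ℝ ↦ ∫ y in L..x, exp (-(↑x - ↑y) * w) := by
  simp_rw [integral_exp_neg_sub_mul hw L]
  fun_prop

theorem tendsto_sq_mul_one_sub_exp_div (hw : 0 ≤ w.re) {T : ℝ} (hT : 0 ≤ T) :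
    Tendsto (fun ε : ℝ ↦ (ε : ℂ) ^ 2 * ((1 - exp (-↑(T / ε ^ 2) * w)) / w ^ 2)) (𝓝[>] 0) (𝓝 0) := by
  refine Tendsto.zero_mul_isBoundedUnder_le ?_
    (isBoundedUnder_of_eventually_le (a := 2 / ‖w‖ ^ 2) ?_)
  · have hsq : Continuous fun ε : ℝ ↦ (ε : ℂ) ^ 2 := by fun_prop
    exact tendsto_nhdsWithin_of_tendsto_nhds (hsq.tendsto' 0 0 (by simp))
  · filter_upwards with ε
    rw [Function.comp_apply, norm_div, norm_pow]
    gcongr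
    exact norm_one_sub_exp_neg_mul_le hw (by positivity)

theorem integral_integral_add_exp_neg_sub_mul {v : ℂ} (hw : w ≠ 0) (hv : v ≠ 0) (L U : ℝ) :
    ∫ x in L..U, ∫ y in L..x, (exp (-(↑x - ↑y) * w) + exp (-(↑x - ↑y) * v)) =
      (∫ x in L..U, ∫ y in L..x, exp (-(↑x - ↑y) * w)) +
        ∫ x in L..U, ∫ y in L..x, exp (-(↑x - ↑y) * v) := by
  have hinner (x : ℝ) := intervalIntegral.integral_add (μ := volume) (a := L) (b := x)
    (f := fun y : ℝ ↦ exp (-(↑x - ↑y) * w)) (g := fun y : ℝ ↦ exp (-(↑x - ↑y) * v))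
    (by apply Continuous.intervalIntegrable; fun_prop)
    (by apply Continuous.intervalIntegrable; fun_prop)
  simp_rw [hinner]
  exact intervalIntegral.integral_add
    ((continuous_integral_exp_neg_sub_mul hw L).intervalIntegrable _ _)
    ((continuous_integral_exp_neg_sub_mul hv L).intervalIntegrable _ _)

theorem tendsto_sq_mul_integral_integral_exp_add_conj (hw : 0 < w.re) {s t : ℝ} (hst : s ≤ t) :
    Tendsto (fun ε : ℝ ↦
        ((ε ^ 2 * (normSq w / (2 * w.re)) : ℝ) : ℂ) * ∫ x in (2 * s / ε ^ 2)..(2 * t / ε ^ 2),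
          ∫ y in (2 * s / ε ^ 2)..x, (exp (-(↑x - ↑y) * w) + exp (-(↑x - ↑y) * conj w)))
      (𝓝[>] 0) (𝓝 ((2 * (t - s) : ℝ) : ℂ)) := by
  have hw₀ : w ≠ 0 := by rintro rfl; simp at hw
  have hw₀' : conj w ≠ 0 := (map_ne_zero _).mpr hw₀
  have hk : ((normSq w / (2 * w.re) : ℝ) : ℂ) * (w⁻¹ + (conj w)⁻¹) = 1 := by
    have : normSq w ≠ 0 := (normSq_pos.mpr hw₀).ne'
    rw [inv_add_inv_conj, ← ofReal_mul, ← ofReal_one]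
    congr 1
    field_simp
  generalize normSq w / (2 * w.re) = k at hk ⊢
  have hT : 0 ≤ 2 * (t - s) := by linarith
  have hlim := (((tendsto_sq_mul_one_sub_exp_div hw.le hT).add
    (tendsto_sq_mul_one_sub_exp_div (w := conj w) (by rw [conj_re]; exact hw.le) hT)).const_mul
      (k : ℂ)).const_sub ((2 * (t - s) : ℝ) : ℂ)
  rw [add_zero, mul_zero, sub_zero] at hlim
  refine hlim.congr' ?_
  filter_upwards [self_mem_nhdsWithin] with ε (hε : 0 < ε)
  have hUL : 2 * t / ε ^ 2 - 2 * s / ε ^ 2 = 2 * (t - s) / ε ^ 2 := by ring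
  rw [integral_integral_add_exp_neg_sub_mul hw₀ hw₀', integral_integral_exp_neg_sub_mul hw₀,
    integral_integral_exp_neg_sub_mul hw₀', hUL]
  have hε : (ε : ℂ) ^ 2 * (2 * (t - s) / ε ^ 2) = 2 * (t - s) := by
    field_simp [ofReal_ne_zero.mpr hε.ne']
  push_cast
  linear_combination -(k * (w⁻¹ + (conj w)⁻¹)) * hε - (2 * (t - s) : ℂ) * hk

end Complex

/-- verification of (H^θ2) for a Lévy process. -/
theorem exp_double_integral_limit (a b : ℝ) (ha : 0 < a) (c : ℝ)
    (hc : c ^ 2 = (a ^ 2 + b ^ 2) / (2 * a)) :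
    ∀ s t : ℝ, 0 ≤ s → s < t →
      Tendsto (fun ε : ℝ =>
          (↑(ε ^ 2 * c ^ 2) : ℂ) * ∫ x in (2 * s / ε ^ 2)..(2 * t / ε ^ 2),
            ∫ y in (2 * s / ε ^ 2)..x,
              (Complex.exp (-(↑x - ↑y) * (↑a + ↑b * Complex.I)) +
                Complex.exp (-(↑x - ↑y) * (↑a - ↑b * Complex.I))))
        (𝓝[>] 0) (𝓝 ((2 * (t - s) : ℝ) : ℂ)) := by
  intro s t _ hst
  have hconj : (↑a - ↑b * I : ℂ) = conj (↑a + ↑b * I) := by simp [sub_eq_add_neg]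
  have hre : (↑a + ↑b * I : ℂ).re = a := by simp
  have hnormSq : normSq (↑a + ↑b * I) = a ^ 2 + b ^ 2 := by simp [normSq_apply]; ring
  have h := tendsto_sq_mul_integral_integral_exp_add_conj (w := ↑a + ↑b * I)
    (by rw [hre]; exact ha) hst.le
  rwa [hre, hnormSq, ← hc, ← hconj] at h
end
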